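/- Let k ≥ 1 and let w ∈ G_k be a good involution. Then: (1) a(xwx⁻¹) = a(w) + 1 and a(−xwx⁻¹) = a(−w); (2) a(xwx⁻¹t) = a(w) and a(−xwx⁻¹t) = a(−w) + 1; (3) for any 1 ≤ i ≤ k with w(i) = i, a(xw x_i⁻¹) = a(w) − 1 and a(−xw x_i⁻¹) = a(−w). -/

import Mathlib

namespace PaperB

open scoped Classical

def B (n : ℕ) : Subgroup (Equiv.Perm ℤ) where
  carrier := {w | (∀ i : ℤ, w (-i) = - w i) ∧ ∀ i : ℤ, (n : ℤ) < |i| → w i = i}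
  one_mem' := ⟨fun _ => rfl, fun _ _ => rfl⟩
  mul_mem' := by
    rintro a b ⟨ha1, ha2⟩ ⟨hb1, hb2⟩
    refine ⟨fun i => ?_, fun i hi => ?_⟩
    · rw [Equiv.Perm.mul_apply, Equiv.Perm.mul_apply, hb1, ha1]
    · rw [Equiv.Perm.mul_apply, hb2 i hi, ha2 i hi]
  inv_mem' := by
    rintro a ⟨ha1, ha2⟩
    refine ⟨fun i => a.injective ?_, fun i hi => a.injective ?_⟩
    · rw [Equiv.Perm.coe_inv, Equiv.apply_symm_apply, ha1, Equiv.apply_symm_apply]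
    · rw [Equiv.Perm.coe_inv, Equiv.apply_symm_apply, ha2 i hi]

def t : Equiv.Perm ℤ := Equiv.swap (-1) 1

def s (i : ℕ) : Equiv.Perm ℤ :=
  Equiv.swap (i : ℤ) ((i : ℤ) + 1) * Equiv.swap (-(i : ℤ)) (-((i : ℤ) + 1))

def gens (n : ℕ) : Set (Equiv.Perm ℤ) := insert t (s '' Set.Ico 1 n)

noncomputable def len (n : ℕ) (w : Equiv.Perm ℤ) : ℕ :=
  sInf {l | ∃ L : List (Equiv.Perm ℤ), (∀ g ∈ L, g ∈ gens n) ∧ L.prod = w ∧ L.length = l}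

/-- A model of the Iwahori–Hecke algebra `H_{p,q}(Bₘ)`:  a `ℂ`-algebra `H` together with a
family `T w`, `w ∈ Bₘ`, which is linearly independent, satisfies `T 1 = 1`, and satisfies the
standard multiplication rule
`T w * T g = T (w g)` if `ℓ(w g) > ℓ(w)` and
`T w * T g = par(g) T (w g) + (1 - par(g)) T w` otherwise,
where `par t = p` and `par sᵢ = q`. -/
structure HeckeModel (m : ℕ) (p q : ℂ) (H : Type) [Ring H] [Algebra ℂ H] where
  T : Equiv.Perm ℤ → H
  T_one : T 1 = 1
  T_mul : ∀ w ∈ B m, ∀ g ∈ gens m,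
    T w * T g =
      if len m w < len m (w * g) then T (w * g)
      else (if g = t then p else q) • T (w * g) + (1 - if g = t then p else q) • T w
  free : LinearIndependent ℂ (fun w : {x // x ∈ B m} => T w.1)

/-- The element `-w`, given by `(-w)(i) = -(w i)`. -/
def negOf (w : Equiv.Perm ℤ) : Equiv.Perm ℤ := (Equiv.neg ℤ : Equiv.Perm ℤ) * w

/-- A good involution in `B_k`. -/
def Good (k : ℕ) (w : Equiv.Perm ℤ) : Prop :=
  w ∈ B k ∧ w * w = 1 ∧ ∀ i : ℤ, 1 ≤ i → i ≤ (k : ℤ) → (w i = i ∨ w i < 0)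

/-- `a(w)`: the number of `1 ≤ j ≤ m` with `w j = j`. -/
noncomputable def aFix (m : ℕ) (w : Equiv.Perm ℤ) : ℕ :=
  ((Finset.Icc (1 : ℤ) (m : ℤ)).filter fun j => w j = j).card

/-- `d(i, w)`: the number of `i < j ≤ m` with `w j = j`. -/
noncomputable def dFix (m : ℕ) (i : ℤ) (w : Equiv.Perm ℤ) : ℕ :=
  ((Finset.Ioc i (m : ℤ)).filter fun j => w j = j).card

/-- `c(w)`: the number of `w`-tidy pairs `{i, j}`, i.e. pairs of distinct indices
`1 ≤ i, j ≤ m` with `-w i < j` and `-w j < i`. -/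
noncomputable def cTidy (m : ℕ) (w : Equiv.Perm ℤ) : ℕ :=
  (((Finset.Icc (1 : ℤ) (m : ℤ)) ×ˢ (Finset.Icc (1 : ℤ) (m : ℤ))).filter
    fun pr => pr.1 < pr.2 ∧ -w pr.1 < pr.2 ∧ -w pr.2 < pr.1).card

/-- `x = t s₁ s₂ ⋯ s_k ∈ B_{k+1}`. -/
def xE (k : ℕ) : Equiv.Perm ℤ := (t :: ((List.range k).map fun j => s (j + 1))).prod

/-- `xᵢ = t s₁ ⋯ ŝᵢ ⋯ s_k ∈ B_{k+1}` (the product with `sᵢ` omitted). -/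
def xI (k i : ℕ) : Equiv.Perm ℤ :=
  (t :: ((((List.range k).map fun j => j + 1).filter fun j => j ≠ i).map s)).prod


/-- The parabolic subgroup `S_k ⊆ B_k` generated by `s₁, …, s_{k-1}`. -/
def Spar (k : ℕ) : Subgroup (Equiv.Perm ℤ) := Subgroup.closure (s '' Set.Ico 1 k)

/-- `c(-w)` for `w ∈ S_k`: the number of neat pairs of `w`, i.e. pairs `{i,j}` of distinct
indices `1 ≤ i, j ≤ k` with `w i < j` and `w j < i`. -/
noncomputable def cNeat (k : ℕ) (w : Equiv.Perm ℤ) : ℕ :=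
  (((Finset.Icc (1 : ℤ) (k : ℤ)) ×ˢ (Finset.Icc (1 : ℤ) (k : ℤ))).filter
    fun pr => pr.1 < pr.2 ∧ w pr.1 < pr.2 ∧ w pr.2 < pr.1).card

/-- The set `X_{0,k}` of distinguished (minimal length) right coset representatives of
`S_k` in `B_k`. -/
def X0 (k : ℕ) : Set (Equiv.Perm ℤ) :=
  {x | x ∈ B k ∧ ∀ u ∈ Spar k, len k x ≤ len k (u * x)}

/-- `Succ(w)` for a good involution `w ∈ G_k`. -/
def Succ (k : ℕ) (w : Equiv.Perm ℤ) : Set (Equiv.Perm ℤ) :=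
  {xE k * w * (xE k)⁻¹, xE k * w * (xE k)⁻¹ * t} ∪
    {y | ∃ i : ℕ, 1 ≤ i ∧ i ≤ k ∧ w (i : ℤ) = (i : ℤ) ∧ y = xE k * w * (xI k i)⁻¹}

/-- The element `c = s_{n+1} s_{n+2} ⋯ s_{n+k} ∈ B_{n+k+1}`. -/
def cElt (n k : ℕ) : Equiv.Perm ℤ := ((List.range k).map fun j => s (n + 1 + j)).prod

/-- The palindromic product `s_{n+k} s_{n+k-1} ⋯ s_{n+i} ⋯ s_{n+k-1} s_{n+k}`. -/
def pal (n k i : ℕ) : Equiv.Perm ℤ :=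
  (((List.range (k - i)).map fun j => s (n + k - j)) ++ [s (n + i)] ++
    ((List.range (k - i)).map fun j => s (n + i + 1 + j))).prod

/-- The parabolic subgroup `B_n × S_k` of `B_{n+k}`, generated by
`{t, s₁, …, s_{n-1}} ∪ {s_{n+1}, …, s_{n+k-1}}` (with `t` omitted when `n = 0`). -/
def P (n k : ℕ) : Subgroup (Equiv.Perm ℤ) :=
  Subgroup.closure
    ((if n = 0 then (∅ : Set (Equiv.Perm ℤ)) else {t}) ∪ s '' Set.Ico 1 n ∪
      s '' Set.Ico (n + 1) (n + k))

/-- The factor `S_k` of `B_n × S_k`, generated by `s_{n+1}, …, s_{n+k-1}`. -/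
def SparF (n k : ℕ) : Subgroup (Equiv.Perm ℤ) := Subgroup.closure (s '' Set.Ico (n + 1) (n + k))

/-- The set `X_{n,k}` of distinguished (minimal length) right coset representatives of
`B_n × S_k` in `B_{n+k}`. -/
def Xnk (n k : ℕ) : Set (Equiv.Perm ℤ) :=
  {x | x ∈ B (n + k) ∧ ∀ u ∈ P n k, len (n + k) x ≤ len (n + k) (u * x)}

/-- The strict Bruhat order on `B_m`: `x < w` iff `x ≠ w` and some reduced expression of `w`
has a subword whose product is `x`. -/
def bruhatLT (m : ℕ) (x w : Equiv.Perm ℤ) : Prop :=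
  x ≠ w ∧ ∃ L : List (Equiv.Perm ℤ), (∀ g ∈ L, g ∈ gens m) ∧ L.prod = w ∧ L.length = len m w ∧
    ∃ L' : List (Equiv.Perm ℤ), L'.Sublist L ∧ L'.prod = x

/-
Conjugation by `x` relabels fixed points: `x` sends `1, …, k` to `2, …, k + 1` and `-(k + 1)` to `1`,
so `a(x v x⁻¹) = a(v) + [v(-(k + 1)) = -(k + 1)]` for every `v` (computed in `B_{k+1}` and `B_k`).
Since `x` commutes with negation, `-(x v x⁻¹) = x (-v) x⁻¹`, so the same count applies to `-w`.
The two remaining cases reduce to this one: `t = x τ x⁻¹` with `τ = (k+1, -(k+1))`, because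
`x(k + 1) = -1`; and `xᵢ = x r` with `r = (i, k+1)(-i, -(k+1))`, since moving `sᵢ` to the right end of
`t s₁ ⋯ s_k` conjugates it by `s_{i+1} ⋯ s_k`. Multiplying `w` on the right by `τ` does not change the
fixed points in `1, …, k`, and multiplying by `r` only destroys the fixed point `i`.
-/

open Equiv Finset

def signedSwap (a b : ℤ) : Perm ℤ := swap a b * swap (-a) (-b)

lemma s_eq_signedSwap (i : ℕ) : s i = signedSwap i (i + 1) := rfl

lemma signedSwap_apply {a b : ℤ} (ha : 0 < a) (hb : 0 < b) (j : ℤ) :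
    signedSwap a b j = if j = a then b else if j = b then a
      else if j = -a then -b else if j = -b then -a else j := by
  simp only [signedSwap, Perm.mul_apply, swap_apply_def]
  split_ifs <;> omega

lemma signedSwap_mul_self {a b : ℤ} (ha : 0 < a) (hb : 0 < b) :
    signedSwap a b * signedSwap a b = 1 := by
  ext j
  simp only [Perm.mul_apply, Perm.one_apply, signedSwap_apply ha hb]
  split_ifs <;> omega

lemma signedSwap_apply_neg {a b : ℤ} (ha : 0 < a) (hb : 0 < b) (j : ℤ) :
    signedSwap a b (-j) = -signedSwap a b j := by
  simp only [signedSwap_apply ha hb]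
  split_ifs <;> omega

lemma signedSwap_conj (f : Perm ℤ) (hf : ∀ j, f (-j) = -f j) (a b : ℤ) :
    f * signedSwap a b * f⁻¹ = signedSwap (f a) (f b) := by
  rw [signedSwap, signedSwap, ← hf, ← hf, swap_apply_apply, swap_apply_apply]
  group

lemma negOf_apply (v : Perm ℤ) (j : ℤ) : negOf v j = -v j := rfl

lemma negOf_mul (v r : Perm ℤ) : negOf (v * r) = negOf v * r := (mul_assoc _ _ _).symm

lemma negOf_conj (x v : Perm ℤ) (hx : ∀ j, x (-j) = -x j) :
    negOf (x * v * x⁻¹) = x * negOf v * x⁻¹ := by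
  ext j
  simp only [negOf, Perm.mul_apply]
  exact (hx _).symm

lemma xE_succ (k : ℕ) : xE (k + 1) = xE k * s (k + 1) := by
  simp [xE, List.range_succ, List.prod_append, mul_assoc]

lemma xE_apply (k : ℕ) (j : ℤ) :
    xE k j = if 1 ≤ j ∧ j ≤ k then j + 1
      else if j = k + 1 then -1
      else if -k ≤ j ∧ j ≤ -1 then j - 1
      else if j = -(k + 1) then 1
      else j := by
  induction k generalizing j with
  | zero =>
    simp only [xE, List.range_zero, List.map_nil, List.prod_cons, List.prod_nil, mul_one, t,
      swap_apply_def]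
    push_cast
    split_ifs <;> omega
  | succ k ih =>
    rw [xE_succ, Perm.mul_apply, s_eq_signedSwap, signedSwap_apply (by omega) (by omega)]
    push_cast
    split_ifs <;> (rw [ih]; split_ifs <;> omega)

lemma xE_apply_neg (k : ℕ) (j : ℤ) : xE k (-j) = -xE k j := by
  rw [xE_apply, xE_apply]
  split_ifs <;> omega

lemma map_xE_insert_Icc (k : ℕ) :
    (insert (-((k : ℤ) + 1)) (Icc 1 (k : ℤ))).map (xE k).toEmbedding = Icc 1 ((k + 1 : ℕ) : ℤ) := by
  ext j
  simp only [mem_map, mem_insert, mem_Icc, toEmbedding_apply]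
  push_cast
  constructor
  · rintro ⟨a, ha, rfl⟩
    rw [xE_apply]
    split_ifs <;> omega
  · intro hj
    by_cases hj1 : j = 1
    · exact ⟨-((k : ℤ) + 1), Or.inl rfl, by rw [xE_apply]; split_ifs <;> omega⟩
    · exact ⟨j - 1, Or.inr (by omega), by rw [xE_apply]; split_ifs <;> omega⟩

lemma card_filter_map_conj_fixed (x v : Perm ℤ) (S : Finset ℤ) :
    #((S.map x.toEmbedding).filter fun j => (x * v * x⁻¹) j = j) = #(S.filter fun j => v j = j) := by
  rw [filter_map, card_map]
  congr 1
  refine filter_congr fun j _ => ?_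
  simp [Perm.mul_apply]

lemma aFix_conj_xE (k : ℕ) (v : Perm ℤ) :
    aFix (k + 1) (xE k * v * (xE k)⁻¹) =
      aFix k v + if v (-((k : ℤ) + 1)) = -((k : ℤ) + 1) then 1 else 0 := by
  rw [aFix, ← map_xE_insert_Icc, card_filter_map_conj_fixed, filter_insert, aFix]
  have hnot : -((k : ℤ) + 1) ∉ (Icc 1 (k : ℤ)).filter fun j => v j = j := by
    rw [mem_filter, mem_Icc]; omega
  split_ifs
  · rw [card_insert_of_notMem hnot]
  · rfl

lemma t_eq_conj_xE (k : ℕ) : t = xE k * swap ((k : ℤ) + 1) (-((k : ℤ) + 1)) * (xE k)⁻¹ := by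
  have h_succ : xE k ((k : ℤ) + 1) = -1 := by rw [xE_apply]; split_ifs <;> omega
  rw [← swap_apply_apply, h_succ, xE_apply_neg, h_succ, neg_neg, t]

lemma xI_self (m : ℕ) : xI (m + 1) (m + 1) = xE m := by
  have hl : (((List.range (m + 1)).map fun j => j + 1).filter fun j => j ≠ m + 1)
      = (List.range m).map fun j => j + 1 := by
    rw [List.range_succ, List.map_append, List.filter_append, List.filter_eq_self.2]
    · simp
    · simp only [List.mem_map, List.mem_range]
      rintro _ ⟨b, hb, rfl⟩
      simpa using hb.ne
  rw [xI, xE, hl, List.map_map]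
  rfl

lemma xI_succ (k i : ℕ) (h : i ≤ k) : xI (k + 1) i = xI k i * s (k + 1) := by
  have : k + 1 ≠ i := by omega
  simp [xI, List.range_succ, List.filter_append, List.prod_append, mul_assoc, this]

lemma xI_eq_xE_mul (k i : ℕ) (hi : 1 ≤ i) (hik : i ≤ k) :
    xI k i = xE k * signedSwap i (k + 1) := by
  obtain ⟨m, rfl⟩ : ∃ m, i = m + 1 := ⟨i - 1, by omega⟩
  induction k, hik using Nat.le_induction with
  | base =>
    rw [xI_self, xE_succ, mul_assoc, s_eq_signedSwap, signedSwap_mul_self (by omega) (by omega),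
      mul_one]
  | succ k hk ih =>
    have hpos : (0 : ℤ) < ((k + 1 : ℕ) : ℤ) := by omega
    have hs_apply := signedSwap_apply hpos (by omega : (0 : ℤ) < ((k + 1 : ℕ) : ℤ) + 1)
    have hs_self : s (k + 1) * s (k + 1) = 1 := signedSwap_mul_self hpos (by omega)
    have hs_i : s (k + 1) ((m + 1 : ℕ) : ℤ) = ((m + 1 : ℕ) : ℤ) := by
      rw [s_eq_signedSwap, hs_apply]; split_ifs <;> omega
    have hs_k : s (k + 1) ((k : ℤ) + 1) = ((k + 1 : ℕ) : ℤ) + 1 := by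
      rw [s_eq_signedSwap, hs_apply]; split_ifs <;> omega
    have hconj := signedSwap_conj (s (k + 1)) (signedSwap_apply_neg hpos (by omega))
      ((m + 1 : ℕ) : ℤ) ((k : ℤ) + 1)
    rw [hs_i, hs_k] at hconj
    rw [xI_succ _ _ hk, ih, xE_succ, ← hconj, inv_eq_of_mul_eq_one_right hs_self]
    simp only [mul_assoc, ← mul_assoc (s (k + 1)) (s (k + 1)), hs_self, one_mul]

lemma aFix_mul_of_fixed {m : ℕ} {v r : Perm ℤ} (hr : ∀ j ∈ Icc 1 (m : ℤ), r j = j) :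
    aFix m (v * r) = aFix m v := by
  unfold aFix
  congr 1
  exact filter_congr fun j hj => by rw [Perm.mul_apply, hr j hj]

lemma aFix_mul_eq_card_erase {m : ℕ} {v r : Perm ℤ} {i : ℤ}
    (hr : ∀ j ∈ Icc 1 (m : ℤ), j ≠ i → r j = j) (hi : v (r i) ≠ i) :
    aFix m (v * r) = #(((Icc 1 (m : ℤ)).filter fun j => v j = j).erase i) := by
  unfold aFix
  congr 1
  ext j
  rw [mem_filter, mem_erase, mem_filter, Perm.mul_apply]
  by_cases hji : j = i
  · subst hji
    simp only [hi, and_false, ne_eq, not_true_eq_false, false_and]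
  · simp only [hji, ne_eq, not_false_eq_true, true_and]
    exact and_congr_right fun hj => by rw [hr j hj hji]

lemma conj_xE_mul_t (k : ℕ) (w : Perm ℤ) :
    xE k * w * (xE k)⁻¹ * t = xE k * (w * swap ((k : ℤ) + 1) (-((k : ℤ) + 1))) * (xE k)⁻¹ := by
  rw [t_eq_conj_xE k]
  simp only [mul_assoc, inv_mul_cancel_left]

lemma conj_xE_mul_xI_inv (k i : ℕ) (hi : 1 ≤ i) (hik : i ≤ k) (w : Perm ℤ) :
    xE k * w * (xI k i)⁻¹ = xE k * (w * signedSwap i ((k : ℤ) + 1)) * (xE k)⁻¹ := by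
  rw [xI_eq_xE_mul k i hi hik, mul_inv_rev,
    inv_eq_of_mul_eq_one_right (signedSwap_mul_self (by omega) (by omega))]
  simp only [mul_assoc]

lemma aFix_conj_xE_mul_swap (k : ℕ) (v : Perm ℤ) :
    aFix (k + 1) (xE k * (v * swap ((k : ℤ) + 1) (-((k : ℤ) + 1))) * (xE k)⁻¹) =
      aFix k v + if v ((k : ℤ) + 1) = -((k : ℤ) + 1) then 1 else 0 := by
  have hfix : ∀ j ∈ Icc 1 (k : ℤ), swap ((k : ℤ) + 1) (-((k : ℤ) + 1)) j = j := fun j hj =>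
    swap_apply_of_ne_of_ne (by rw [mem_Icc] at hj; omega) (by rw [mem_Icc] at hj; omega)
  rw [aFix_conj_xE, aFix_mul_of_fixed hfix, Perm.mul_apply, swap_apply_right]

lemma aFix_conj_xE_mul_signedSwap (k i : ℕ) (hi : 1 ≤ i) (hik : i ≤ k) (v : Perm ℤ)
    (hv_succ : v ((k : ℤ) + 1) ≠ i) (hv_neg : v (-i) ≠ -((k : ℤ) + 1)) :
    aFix (k + 1) (xE k * (v * signedSwap i ((k : ℤ) + 1)) * (xE k)⁻¹) =
      #(((Icc 1 (k : ℤ)).filter fun j => v j = j).erase i) := by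
  have hr := signedSwap_apply (a := i) (b := (k : ℤ) + 1) (by omega) (by omega)
  have hfix : ∀ j ∈ Icc 1 (k : ℤ), j ≠ i → signedSwap i ((k : ℤ) + 1) j = j := fun j hj hji => by
    rw [mem_Icc] at hj; rw [hr]; split_ifs <;> omega
  have hr_neg_succ : signedSwap i ((k : ℤ) + 1) (-((k : ℤ) + 1)) = -i := by
    rw [hr]; split_ifs <;> omega
  rw [aFix_conj_xE, aFix_mul_eq_card_erase hfix (by rwa [hr, if_pos rfl]), Perm.mul_apply,
    hr_neg_succ, if_neg hv_neg, add_zero]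

theorem aFix_succ_general (k : ℕ) (w : Equiv.Perm ℤ) (hw : Good k w) :
    (aFix (k + 1) (xE k * w * (xE k)⁻¹) = aFix k w + 1 ∧
      aFix (k + 1) (negOf (xE k * w * (xE k)⁻¹)) = aFix k (negOf w)) ∧
    (aFix (k + 1) (xE k * w * (xE k)⁻¹ * t) = aFix k w ∧
      aFix (k + 1) (negOf (xE k * w * (xE k)⁻¹ * t)) = aFix k (negOf w) + 1) ∧
    (∀ i : ℕ, 1 ≤ i → i ≤ k → w (i : ℤ) = (i : ℤ) →
      aFix (k + 1) (xE k * w * (xI k i)⁻¹) = aFix k w - 1 ∧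
      aFix (k + 1) (negOf (xE k * w * (xI k i)⁻¹)) = aFix k (negOf w)) := by
  obtain ⟨⟨hw_neg, hw_fix⟩, -, -⟩ := hw
  have hw_succ : w ((k : ℤ) + 1) = (k : ℤ) + 1 := hw_fix _ (by rw [abs_of_pos (by omega)]; omega)
  have hw_neg_succ : w (-((k : ℤ) + 1)) = -((k : ℤ) + 1) := by rw [hw_neg, hw_succ]
  have hx_neg := xE_apply_neg k
  refine ⟨⟨?_, ?_⟩, ⟨?_, ?_⟩, fun i hi hik hwi => ?_⟩
  · rw [aFix_conj_xE, if_pos hw_neg_succ]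
  · rw [negOf_conj _ _ hx_neg, aFix_conj_xE, negOf_apply, hw_neg_succ, if_neg (by omega), add_zero]
  · rw [conj_xE_mul_t, aFix_conj_xE_mul_swap, hw_succ, if_neg (by omega), add_zero]
  · rw [conj_xE_mul_t, negOf_conj _ _ hx_neg, negOf_mul, aFix_conj_xE_mul_swap, negOf_apply,
      hw_succ, if_pos rfl]
  · have hi_mem : (i : ℤ) ∈ (Icc 1 (k : ℤ)).filter fun j => w j = j := by
      rw [mem_filter, mem_Icc]; omega
    have hi_not_mem : (i : ℤ) ∉ (Icc 1 (k : ℤ)).filter fun j => negOf w j = j := by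
      rw [mem_filter, negOf_apply, hwi]; omega
    rw [conj_xE_mul_xI_inv k i hi hik, negOf_conj _ _ hx_neg, negOf_mul,
      aFix_conj_xE_mul_signedSwap k i hi hik _ (by omega) (by rw [hw_neg, hwi]; omega),
      aFix_conj_xE_mul_signedSwap k i hi hik _ (by rw [negOf_apply]; omega)
        (by rw [negOf_apply, hw_neg, hwi]; omega),
      card_erase_of_mem hi_mem, erase_eq_of_notMem hi_not_mem]
    exact ⟨rfl, rfl⟩

theorem aFix_succ (k : ℕ) (hk : 1 ≤ k) (w : Equiv.Perm ℤ) (hw : Good k w) :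
    (aFix (k + 1) (xE k * w * (xE k)⁻¹) = aFix k w + 1 ∧
      aFix (k + 1) (negOf (xE k * w * (xE k)⁻¹)) = aFix k (negOf w)) ∧
    (aFix (k + 1) (xE k * w * (xE k)⁻¹ * t) = aFix k w ∧
      aFix (k + 1) (negOf (xE k * w * (xE k)⁻¹ * t)) = aFix k (negOf w) + 1) ∧
    (∀ i : ℕ, 1 ≤ i → i ≤ k → w (i : ℤ) = (i : ℤ) →
      aFix (k + 1) (xE k * w * (xI k i)⁻¹) = aFix k w - 1 ∧
      aFix (k + 1) (negOf (xE k * w * (xI k i)⁻¹)) = aFix k (negOf w)) :=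
  aFix_succ_general k w hw

end PaperB
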